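/- arXiv:1506.00101 — 8 statements merged into one kernel-verified Lean document; each statement's English description precedes it below -/
import Mathlib

section
/- Let R, α, β be real numbers with α ≠ 0 and β ≠ 0, and suppose α²β⁴ ≥ (4/27)R³. Then for every s > 0 one has β²s¹² − R s⁸ + α² ≥ 0. Moreover, there exists s > 0 with β²s¹² − R s⁸ + α² = 0 if and only if R > 0, α²β⁴ = (4/27)R³, and in that case the unique such s equals (2R/(3β²))^(1/4). -/
/-!
With `t = s⁴` the polynomial becomes the cubic `β² t³ - R t² + α²`, and the discriminant-type
identity `27 b² (b t³ - R t² + a) = (3bt - 2R)² (3bt + R) + (27ab² - 4R³)` writes it, for `R > 0`,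
as a sum of two nonnegative terms. A positive root therefore forces both terms to vanish:
`27α²β⁴ = 4R³` and `3β² s⁴ = 2R`.
-/

section Cubic

variable {a b R t : ℝ}

lemma mul_cubic_eq (a b R t : ℝ) :
    27 * b ^ 2 * (b * t ^ 3 - R * t ^ 2 + a)
      = (3 * b * t - 2 * R) ^ 2 * (3 * b * t + R) + (27 * a * b ^ 2 - 4 * R ^ 3) := by
  ring

lemma cubic_pos_of_nonpos (ha : 0 ≤ a) (hb : 0 < b) (ht : 0 < t) (hR : R ≤ 0) :
    0 < b * t ^ 3 - R * t ^ 2 + a := by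
  have : 0 ≤ -R * t ^ 2 := mul_nonneg (neg_nonneg.mpr hR) (sq_nonneg t)
  nlinarith [mul_pos hb (pow_pos ht 3)]

lemma cubic_nonneg (ha : 0 ≤ a) (hb : 0 < b) (hdisc : 4 * R ^ 3 ≤ 27 * a * b ^ 2)
    (ht : 0 < t) : 0 ≤ b * t ^ 3 - R * t ^ 2 + a := by
  rcases le_or_gt R 0 with hR | hR
  · exact (cubic_pos_of_nonpos ha hb ht hR).le
  · have hsum : 0 ≤ 27 * b ^ 2 * (b * t ^ 3 - R * t ^ 2 + a) := by
      rw [mul_cubic_eq]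
      have : 0 ≤ 3 * b * t + R := by positivity
      nlinarith [mul_nonneg (sq_nonneg (3 * b * t - 2 * R)) this]
    exact nonneg_of_mul_nonneg_right hsum (by positivity)

lemma cubic_eq_zero_iff (ha : 0 ≤ a) (hb : 0 < b) (hdisc : 4 * R ^ 3 ≤ 27 * a * b ^ 2)
    (ht : 0 < t) :
    b * t ^ 3 - R * t ^ 2 + a = 0 ↔ 0 < R ∧ 27 * a * b ^ 2 = 4 * R ^ 3 ∧ 3 * b * t = 2 * R := by
  constructor
  · intro hroot
    have hR : 0 < R := by
      by_contra! hR
      exact (cubic_pos_of_nonpos ha hb ht hR).ne' hroot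
    have hsum := mul_cubic_eq a b R t
    rw [hroot, mul_zero] at hsum
    have hsq : 0 ≤ (3 * b * t - 2 * R) ^ 2 * (3 * b * t + R) := by positivity
    have hsq0 : (3 * b * t - 2 * R) ^ 2 * (3 * b * t + R) = 0 := by linarith
    have hlin : 3 * b * t - 2 * R = 0 := by
      simpa [(by positivity : 3 * b * t + R ≠ 0)] using hsq0
    exact ⟨hR, by linarith, by linarith⟩
  · rintro ⟨-, hdisc_eq, hcrit⟩
    have hsum := mul_cubic_eq a b R t
    rw [hcrit, hdisc_eq] at hsum
    have : 27 * b ^ 2 ≠ 0 := by positivity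
    simpa [this] using hsum

end Cubic

lemma eq_rpow_one_div_four_iff {s c : ℝ} (hs : 0 ≤ s) (hc : 0 ≤ c) :
    s = c ^ ((1 : ℝ) / 4) ↔ s ^ 4 = c := by
  rw [one_div, Real.eq_rpow_inv hs hc (by norm_num), ← Real.rpow_natCast]
  norm_num

theorem stmt_0_general (R α β : ℝ) (hβ : β ≠ 0)
    (h : α ^ 2 * β ^ 4 ≥ (4 / 27) * R ^ 3) :
    (∀ s : ℝ, 0 < s → β ^ 2 * s ^ 12 - R * s ^ 8 + α ^ 2 ≥ 0) ∧
    ((∃ s : ℝ, 0 < s ∧ β ^ 2 * s ^ 12 - R * s ^ 8 + α ^ 2 = 0) ↔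
      (0 < R ∧ α ^ 2 * β ^ 4 = (4 / 27) * R ^ 3)) ∧
    (∀ s : ℝ, 0 < s → β ^ 2 * s ^ 12 - R * s ^ 8 + α ^ 2 = 0 →
      s = (2 * R / (3 * β ^ 2)) ^ ((1 : ℝ) / 4)) := by
  have ha : 0 ≤ α ^ 2 := sq_nonneg α
  have hb : 0 < β ^ 2 := by positivity
  have hdisc : 4 * R ^ 3 ≤ 27 * α ^ 2 * (β ^ 2) ^ 2 := by linarith
  have hsubst (s : ℝ) : β ^ 2 * s ^ 12 - R * s ^ 8 + α ^ 2
      = β ^ 2 * (s ^ 4) ^ 3 - R * (s ^ 4) ^ 2 + α ^ 2 := by ring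
  have hroot (s : ℝ) (hs : 0 < s) : β ^ 2 * s ^ 12 - R * s ^ 8 + α ^ 2 = 0 ↔
      0 < R ∧ α ^ 2 * β ^ 4 = (4 / 27) * R ^ 3 ∧ s = (2 * R / (3 * β ^ 2)) ^ ((1 : ℝ) / 4) := by
    rw [hsubst, cubic_eq_zero_iff ha hb hdisc (by positivity)]
    refine and_congr_right fun hR => and_congr (by constructor <;> intro <;> linarith) ?_
    rw [eq_rpow_one_div_four_iff hs.le (by positivity), eq_div_iff (by positivity)]
    constructor <;> intro <;> linarith
  refine ⟨fun s hs => (hsubst s).symm ▸ cubic_nonneg ha hb hdisc (by positivity),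
    ⟨fun ⟨s, hs, hs0⟩ => ((hroot s hs).mp hs0).imp_right And.left, fun ⟨hR, hdisc_eq⟩ => ?_⟩,
    fun s hs hs0 => ((hroot s hs).mp hs0).2.2⟩
  have hc : 0 < 2 * R / (3 * β ^ 2) := by positivity
  have hs : 0 < (2 * R / (3 * β ^ 2)) ^ ((1 : ℝ) / 4) := Real.rpow_pos_of_pos hc _
  exact ⟨_, hs, (hroot _ hs).mpr ⟨hR, hdisc_eq, rfl⟩⟩

/-- sign analysis of the polynomial `s ↦ β²s¹² − R s⁸ + α²`
(algebraic core of Proposition 2.1). -/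
theorem stmt_0 (R α β : ℝ) (hα : α ≠ 0) (hβ : β ≠ 0)
    (h : α ^ 2 * β ^ 4 ≥ (4 / 27) * R ^ 3) :
    (∀ s : ℝ, 0 < s → β ^ 2 * s ^ 12 - R * s ^ 8 + α ^ 2 ≥ 0) ∧
    ((∃ s : ℝ, 0 < s ∧ β ^ 2 * s ^ 12 - R * s ^ 8 + α ^ 2 = 0) ↔
      (0 < R ∧ α ^ 2 * β ^ 4 = (4 / 27) * R ^ 3)) ∧
    (∀ s : ℝ, 0 < s → β ^ 2 * s ^ 12 - R * s ^ 8 + α ^ 2 = 0 →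
      s = (2 * R / (3 * β ^ 2)) ^ ((1 : ℝ) / 4)) :=
  stmt_0_general R α β hβ h
end

section
/- Let R, α, β be real numbers with α ≠ 0 and β ≠ 0, and let φ : ℝ → ℝ be a C², everywhere positive function that is periodic with some period L > 0 and satisfies φ''(t) = (1/8)(R·φ(t) − β²·φ(t)⁵ − α²·φ(t)⁻⁷) for all t ∈ ℝ. If α²β⁴ ≥ (4/27)R³, then necessarily α²β⁴ = (4/27)R³, R > 0, and φ is constant, equal to (2R/(3β²))^(1/4). -/
/-- AM-GM style cubic inequality. -/
lemma stmt1_amgm (s t : ℝ) (hs : 0 ≤ s) (ht : 0 ≤ t) : 27 * s^2 * t ≤ 4 * (s+t)^3 := by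
  nlinarith [mul_nonneg (mul_nonneg (sq_nonneg (s - 2*t)) hs) ht,
    mul_nonneg (sq_nonneg (s-2*t)) hs, mul_nonneg (sq_nonneg (s-2*t)) ht]

/-- Key pointwise inequality: above/at the threshold the ODE RHS is ≤ 0. -/
lemma stmt1_key (R α β : ℝ) (hα : α ≠ 0) (hβ : β ≠ 0)
    (h : α ^ 2 * β ^ 4 ≥ (4 / 27) * R ^ 3) (x : ℝ) (hx : 0 < x) :
    R * x - β ^ 2 * x ^ 5 - α ^ 2 / x ^ 7 ≤ 0 := by
  have hx7 : 0 < x ^ 7 := by positivity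
  have key : R * x ^ 8 ≤ β ^ 2 * x ^ 12 + α ^ 2 := by
    rcases le_or_gt R 0 with hR | hR
    · have : R * x ^ 8 ≤ 0 := mul_nonpos_of_nonpos_of_nonneg hR (by positivity)
      nlinarith [sq_nonneg α, sq_nonneg (β * x^6)]
    · have hb : (0:ℝ) ≤ β ^ 2 * x ^ 12 + α ^ 2 := by positivity
      refine le_of_pow_le_pow_left₀ (n := 3) (by norm_num) hb ?_
      have h1 := stmt1_amgm (β ^ 2 * x ^ 12) (α ^ 2) (by positivity) (by positivity)
      have h2 : R ^ 3 * x ^ 24 ≤ (27/4) * (α ^ 2 * β ^ 4) * x ^ 24 := by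
        have : R ^ 3 ≤ (27/4) * (α ^ 2 * β ^ 4) := by linarith
        nlinarith [pow_pos hx 24]
      nlinarith [h1, h2]
  rw [sub_nonpos, ← sub_le_iff_le_add'] at *
  rw [le_div_iff₀ hx7]
  nlinarith [key]

/-- A periodic antitone function is constant. -/
lemma stmt1_const_of_periodic_antitone (f : ℝ → ℝ) (L : ℝ) (hL : 0 < L)
    (hper : Function.Periodic f L) (hanti : Antitone f) (t : ℝ) : f t = f 0 := by
  obtain ⟨n, hn⟩ := exists_nat_ge (|t| / L)
  have hnL : |t| ≤ n * L := by
    rw [div_le_iff₀ hL] at hn; exact hn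
  have h1 : f (-(n * L)) = f 0 := by
    have := (hper.nat_mul n).neg 0
    simpa using this
  have h2 : f (n * L) = f 0 := by
    have := hper.nat_mul n 0
    simpa using this
  have hle1 : f t ≤ f 0 := h1 ▸ hanti (by cases abs_le.mp hnL; linarith)
  have hle2 : f 0 ≤ f t := h2 ▸ hanti (by cases abs_le.mp hnL; linarith)
  linarith

/-- ODE form of Proposition 2.1: above the threshold there is no
positive periodic solution, and at the threshold the only one is the constant
`(2R/(3β²))^(1/4)`. -/
theorem stmt_1 (R α β : ℝ) (hα : α ≠ 0) (hβ : β ≠ 0) (φ : ℝ → ℝ)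
    (hφ : ContDiff ℝ 2 φ) (hpos : ∀ t, 0 < φ t)
    (L : ℝ) (hL : 0 < L) (hper : Function.Periodic φ L)
    (hode : ∀ t, deriv (deriv φ) t
      = (1 / 8) * (R * φ t - β ^ 2 * (φ t) ^ 5 - α ^ 2 / (φ t) ^ 7))
    (h : α ^ 2 * β ^ 4 ≥ (4 / 27) * R ^ 3) :
    α ^ 2 * β ^ 4 = (4 / 27) * R ^ 3 ∧ 0 < R ∧
      ∀ t, φ t = (2 * R / (3 * β ^ 2)) ^ ((1 : ℝ) / 4) := by
  -- differentiability facts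
  have hφ' : ContDiff ℝ (1+1) φ := by
    rw [show ((1:WithTop ℕ∞)+1) = 2 by norm_num]; exact hφ
  have hdiff : Differentiable ℝ φ := hφ.differentiable (by norm_num)
  have hdiff2 : Differentiable ℝ (deriv φ) :=
    ((contDiff_succ_iff_deriv.mp hφ').2.2).differentiable one_ne_zero
  -- second derivative nonpositive
  have h2nonpos : ∀ t, deriv (deriv φ) t ≤ 0 := by
    intro t
    rw [hode t]
    have := stmt1_key R α β hα hβ h (φ t) (hpos t)
    linarith
  -- deriv φ is antitone and periodic, hence constant
  have hanti : Antitone (deriv φ) := antitone_of_deriv_nonpos hdiff2 h2nonpos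
  have hperd : Function.Periodic (deriv φ) L := by
    intro t
    have : deriv (fun x => φ (x + L)) t = deriv φ (t + L) := deriv_comp_add_const φ L t
    rw [← this]
    congr 1
    funext x
    exact hper x
  have hdconst : ∀ t, deriv φ t = deriv φ 0 :=
    stmt1_const_of_periodic_antitone (deriv φ) L hL hperd hanti
  -- the constant derivative must be zero (else φ unbounded, contradicting periodicity)
  set c := deriv φ 0 with hc
  clear_value c
  have haff : ∀ t, φ t = φ 0 + c * t := by
    intro t
    have hg : Differentiable ℝ (fun x => φ x - c * x) :=
      hdiff.sub ((differentiable_const c).mul differentiable_id)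
    have hg' : ∀ x, deriv (fun x => φ x - c * x) x = 0 := by
      intro x
      have hda : HasDerivAt (fun x => φ x - c * x) (deriv φ x - c) x :=
        (hdiff x).hasDerivAt.sub (by simpa using (hasDerivAt_id x).const_mul c)
      rw [hda.deriv, hdconst x]
      ring
    have := is_const_of_deriv_eq_zero hg hg' t 0
    linarith [this]
  have hc0 : c = 0 := by
    have h1 : φ L = φ 0 := by simpa using hper 0
    have h2 := haff L
    rw [h1] at h2
    have : c * L = 0 := by linarith
    rcases mul_eq_zero.mp this with h' | h'
    · exact h'
    · exact absurd h' (ne_of_gt hL)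
  -- φ is constant, value a := φ 0
  set a := φ 0 with ha
  clear_value a
  have hconst : ∀ t, φ t = a := by
    intro t; rw [haff t, hc0]; ring
  have hapos : 0 < a := ha ▸ hpos 0
  -- plug into the ODE: second derivative is zero
  have hdd0 : ∀ t, deriv (deriv φ) t = 0 := by
    intro t
    have : deriv φ = fun _ => c := by funext s; exact hdconst s
    rw [this, hc0]
    simp
  have hE : R * a - β ^ 2 * a ^ 5 - α ^ 2 / a ^ 7 = 0 := by
    have := hode 0
    rw [hdd0 0, ← ha] at this
    linarith
  have ha7 : (0:ℝ) < a ^ 7 := by positivity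
  have hE' : R * a ^ 8 = β ^ 2 * a ^ 12 + α ^ 2 := by
    have : (R * a - β ^ 2 * a ^ 5) * a ^ 7 = α ^ 2 := by
      field_simp at hE
      nlinarith [hE]
    nlinarith [this]
  -- R > 0
  have hα2 : 0 < α ^ 2 := by positivity
  have hβ2 : 0 < β ^ 2 := by positivity
  have hRpos : 0 < R := by
    by_contra hR
    push_neg at hR
    have : R * a ^ 8 ≤ 0 := mul_nonpos_of_nonpos_of_nonneg hR (by positivity)
    nlinarith [pow_pos hapos 12]
  -- set u = β² a⁴ ; the constraint forces u = 2R/3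
  set u := β ^ 2 * a ^ 4 with hu
  clear_value u
  have hupos : 0 < u := by rw [hu]; positivity
  have hEu : 27 * (R * u ^ 2 - u ^ 3) ≥ 4 * R ^ 3 := by
    -- from hE' : α² = R a⁸ − β² a¹², substitute into h
    have hα2eq : α ^ 2 = R * a ^ 8 - β ^ 2 * a ^ 12 := by linarith
    have h' : 27 * (α ^ 2 * β ^ 4) ≥ 4 * R ^ 3 := by linarith
    rw [hα2eq] at h'
    have e1 : R * u ^ 2 - u ^ 3 = (R * a ^ 8 - β ^ 2 * a ^ 12) * β ^ 4 := by
      rw [hu]; ring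
    linarith [h']
  have hufact : (3 * u - 2 * R) ^ 2 * (3 * u + R) ≤ 0 := by nlinarith [hEu]
  have hueq : u = 2 * R / 3 := by
    have hpos' : 0 < 3 * u + R := by linarith
    have : (3 * u - 2 * R) ^ 2 ≤ 0 := by
      by_contra hcon
      push_neg at hcon
      nlinarith
    have hz : (3 * u - 2 * R) ^ 2 = 0 := le_antisymm this (sq_nonneg _)
    have := pow_eq_zero_iff (n := 2) (by norm_num) |>.mp hz
    linarith
  -- conclude the threshold equality
  have hα2eq : α ^ 2 = R * a ^ 8 - β ^ 2 * a ^ 12 := by linarith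
  have hthr : α ^ 2 * β ^ 4 = (4 / 27) * R ^ 3 := by
    have ha4 : β ^ 2 * a ^ 4 = 2 * R / 3 := hu ▸ hueq
    have e1 : (R * a ^ 8 - β ^ 2 * a ^ 12) * β ^ 4 = R * u ^ 2 - u ^ 3 := by
      rw [hu]; ring
    rw [hα2eq, e1, hueq]; ring
  refine ⟨hthr, hRpos, fun t => ?_⟩
  rw [hconst t]
  have ha4 : a ^ 4 = 2 * R / (3 * β ^ 2) := by
    rw [eq_div_iff (by positivity)]
    linear_combination 3 * hueq - 3 * hu
  rw [← ha4]
  rw [show ((a:ℝ) ^ 4) = a ^ ((4:ℕ):ℝ) by rw [Real.rpow_natCast],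
    ← Real.rpow_mul hapos.le]
  norm_num
end

section
/- Let R, α, β be real numbers and let φ : ℝ → ℝ be a C², everywhere positive function that is periodic with some period L > 0 and satisfies φ''(t) = (1/8)(R·φ(t) − β²·φ(t)⁵ − α²·φ(t)⁻⁷) for all t ∈ ℝ. Then there exists s > 0 with β²s¹² − R s⁸ + α² = 0; in particular the constant function s solves the same ODE. -/
/-- a positive periodic solution of the reduced Lichnerowicz ODE
forces existence of a positive root of `β²s¹² − Rs⁸ + α²`, i.e. of a constant
solution of the same ODE. -/
theorem stmt_2 (R α β : ℝ) (φ : ℝ → ℝ)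
    (hφ : ContDiff ℝ 2 φ) (hpos : ∀ t, 0 < φ t)
    (L : ℝ) (hL : 0 < L) (hper : Function.Periodic φ L)
    (hode : ∀ t, deriv (deriv φ) t
      = (1 / 8) * (R * φ t - β ^ 2 * (φ t) ^ 5 - α ^ 2 / (φ t) ^ 7)) :
    ∃ s : ℝ, 0 < s ∧ β ^ 2 * s ^ 12 - R * s ^ 8 + α ^ 2 = 0 ∧
      ∀ t : ℝ, deriv (deriv (fun _ : ℝ => s)) t
        = (1 / 8) * (R * s - β ^ 2 * s ^ 5 - α ^ 2 / s ^ 7) := by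
  set h : ℝ → ℝ := fun t => (1 / 8) * (R * φ t - β ^ 2 * (φ t) ^ 5 - α ^ 2 / (φ t) ^ 7)
    with hh
  have hcφ : Continuous φ := hφ.continuous
  have hcont : Continuous h := by
    apply Continuous.mul continuous_const
    apply Continuous.sub
    · exact (continuous_const.mul hcφ).sub (continuous_const.mul (hcφ.pow 5))
    · exact continuous_const.div (hcφ.pow 7) fun t => pow_ne_zero _ (hpos t).ne'
  -- derivative structure
  have h2 : ContDiff ℝ (1 + 1) φ := by norm_num; exact hφ
  rw [contDiff_succ_iff_deriv] at h2
  have hdiff : Differentiable ℝ φ := h2.1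
  have hdiff' : Differentiable ℝ (deriv φ) := h2.2.2.differentiable one_ne_zero
  -- deriv φ is periodic
  have hperd : Function.Periodic (deriv φ) L := by
    intro t
    have : (fun x => φ (x + L)) = φ := funext fun x => hper x
    calc deriv φ (t + L) = deriv (fun x => φ (x + L)) t := (deriv_comp_add_const φ L t).symm
      _ = deriv φ t := by rw [this]
  -- there is a zero of h
  have key : ∃ t, h t = 0 := by
    by_contra hno
    push_neg at hno
    rcases (hno 0).lt_or_gt with hneg | hposz
    · have hall : ∀ t, h t < 0 := by
        intro t
        rcases (hno t).lt_or_gt with h' | h'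
        · exact h'
        · exfalso
          have := intermediate_value_univ 0 t hcont (by constructor <;> linarith : (0:ℝ) ∈ Set.Icc (h 0) (h t))
          obtain ⟨u, hu⟩ := this
          exact hno u hu
      have hanti : StrictAnti (deriv φ) :=
        strictAnti_of_deriv_neg fun t => by rw [hode t]; exact hall t
      have := hanti (show (0:ℝ) < L from hL)
      rw [hperd.eq.symm] at this
      simp at this
    · have hall : ∀ t, 0 < h t := by
        intro t
        rcases (hno t).lt_or_gt with h' | h'
        · exfalso
          have := intermediate_value_univ t 0 hcont (by constructor <;> linarith : (0:ℝ) ∈ Set.Icc (h t) (h 0))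
          obtain ⟨u, hu⟩ := this
          exact hno u hu
        · exact h'
      have hmono : StrictMono (deriv φ) :=
        strictMono_of_deriv_pos fun t => by rw [hode t]; exact hall t
      have := hmono (show (0:ℝ) < L from hL)
      rw [hperd.eq.symm] at this
      simp at this
  obtain ⟨t0, ht0⟩ := key
  refine ⟨φ t0, hpos t0, ?_, ?_⟩
  · have hne : φ t0 ≠ 0 := (hpos t0).ne'
    have : R * φ t0 - β ^ 2 * (φ t0) ^ 5 - α ^ 2 / (φ t0) ^ 7 = 0 := by
      have := ht0
      rw [hh] at this
      simp only at this
      linarith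
    field_simp at this
    nlinarith [this]
  · intro t
    have hz : R * φ t0 - β ^ 2 * (φ t0) ^ 5 - α ^ 2 / (φ t0) ^ 7 = 0 := by
      have := ht0
      rw [hh] at this
      simp only at this
      linarith
    simp [hz]
end

section
/- Let R, α, β be real numbers with R ≤ 0 and α ≠ 0. Then there is no C², everywhere positive, periodic function φ : ℝ → ℝ satisfying φ''(t) = (1/8)(R·φ(t) − β²·φ(t)⁵ − α²·φ(t)⁻⁷) for all t ∈ ℝ. -/
/-!
Since `R ≤ 0`, `β² ≥ 0` and `α ≠ 0`, the right-hand side of the equation is negative at every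
positive value of `φ`. So `φ'' < 0`, and `φ'` is strictly decreasing; but `φ'` inherits the period
of `φ`, and a periodic function with nonzero period is not injective.
-/

theorem Function.Periodic.deriv {𝕜 F : Type*} [NontriviallyNormedField 𝕜] [NormedAddCommGroup F]
    [NormedSpace 𝕜 F] {f : 𝕜 → F} {c : 𝕜} (hf : Function.Periodic f c) :
    Function.Periodic (deriv f) c := fun x => by
  rw [← deriv_comp_add_const, show (fun y => f (y + c)) = f from funext hf]

theorem not_periodic_of_deriv_deriv_neg {f : ℝ → ℝ} (hf : ∀ t, deriv (deriv f) t < 0) {L : ℝ}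
    (hL : L ≠ 0) : ¬ Function.Periodic f L := fun hper =>
  hper.deriv.not_injective hL (strictAnti_of_deriv_neg hf).injective

theorem lichnerowicz_rhs_neg {R α β s : ℝ} (hR : R ≤ 0) (hα : α ≠ 0) (hs : 0 < s) :
    R * s - β ^ 2 * s ^ 5 - α ^ 2 / s ^ 7 < 0 := by
  have hRs : R * s ≤ 0 := mul_nonpos_of_nonpos_of_nonneg hR hs.le
  have hβs : 0 ≤ β ^ 2 * s ^ 5 := by positivity
  have hαs : 0 < α ^ 2 / s ^ 7 := by positivity
  linarith

/-- nonpositive scalar curvature `R` is incompatible with existence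
of positive periodic solutions of the reduced Lichnerowicz ODE when `α ≠ 0`. -/
theorem stmt_3 (R α β : ℝ) (hR : R ≤ 0) (hα : α ≠ 0) :
    ¬ ∃ φ : ℝ → ℝ, ContDiff ℝ 2 φ ∧ (∀ t, 0 < φ t) ∧
      (∃ L : ℝ, 0 < L ∧ Function.Periodic φ L) ∧
      (∀ t, deriv (deriv φ) t
        = (1 / 8) * (R * φ t - β ^ 2 * (φ t) ^ 5 - α ^ 2 / (φ t) ^ 7)) := by
  rintro ⟨φ, -, hpos, ⟨L, hL, hper⟩, hode⟩
  have hconcave : ∀ t, deriv (deriv φ) t < 0 := fun t => by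
    rw [hode t]
    linarith [lichnerowicz_rhs_neg (β := β) hR hα (hpos t)]
  exact not_periodic_of_deriv_deriv_neg hconcave hL.ne' hper
end

section
/- Let α, β > 0 and set x = √2·α/β. For every φ > 0 one has the factorization 8φ⁷·V'(φ) = (φ⁴ − 1)·(β²φ⁸ − α²(1 + φ⁴)), and consequently V'(φ) = 0 if and only if φ = 1 or φ⁴ = (x/4)·(x + √(x² + 8)). -/
/-!
Clearing denominators, `8φ⁷V'(φ)` is a polynomial that factors as stated. Its second factor
vanishes iff `t = φ⁴ > 0` solves `β²t² = α²(1 + t)`, i.e. `2t² = x²(1 + t)`; this quadratic has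
exactly one positive root, `(x/4)(x + √(x² + 8))`.
-/

noncomputable def V (α β φ : ℝ) : ℝ :=
  -((α ^ 2 + β ^ 2) / 16) * φ ^ 2 + (β ^ 2 / 48) * φ ^ 6 - (α ^ 2 / 48) / φ ^ 6

theorem hasDerivAt_V (α β : ℝ) {φ : ℝ} (hφ : φ ≠ 0) :
    HasDerivAt (V α β)
      ((φ ^ 4 - 1) * (β ^ 2 * φ ^ 8 - α ^ 2 * (1 + φ ^ 4)) / (8 * φ ^ 7)) φ := by
  have h := (((hasDerivAt_pow 2 φ).const_mul (-((α ^ 2 + β ^ 2) / 16))).add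
    ((hasDerivAt_pow 6 φ).const_mul (β ^ 2 / 48))).sub
    ((hasDerivAt_const φ (α ^ 2 / 48)).div (hasDerivAt_pow 6 φ) (pow_ne_zero 6 hφ))
  refine HasDerivAt.congr_deriv (f := V α β) h ?_
  field_simp
  ring

theorem eight_mul_pow_seven_mul_deriv_V (α β : ℝ) {φ : ℝ} (hφ : φ ≠ 0) :
    8 * φ ^ 7 * deriv (V α β) φ = (φ ^ 4 - 1) * (β ^ 2 * φ ^ 8 - α ^ 2 * (1 + φ ^ 4)) := by
  rw [(hasDerivAt_V α β hφ).deriv]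
  field_simp

theorem two_mul_sq_eq_sq_mul_one_add_iff {x t : ℝ} (hx : 0 < x) (ht : 0 < t) :
    2 * t ^ 2 = x ^ 2 * (1 + t) ↔ t = x / 4 * (x + √(x ^ 2 + 8)) := by
  set r := x / 4 * (x + √(x ^ 2 + 8))
  have hs : √(x ^ 2 + 8) ^ 2 = x ^ 2 + 8 := Real.sq_sqrt (by positivity)
  have hr : 2 * r ^ 2 = x ^ 2 * (1 + r) := by linear_combination x ^ 2 / 8 * hs
  have hr0 : 0 < r := by positivity
  refine ⟨fun h ↦ ?_, fun h ↦ h ▸ hr⟩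
  -- a positive root `t` satisfies `2t² > x²t`, hence `2t > x²` and the cofactor of `t - r` is positive
  have hfactor : (t - r) * (2 * (t + r) - x ^ 2) = 0 := by linear_combination h - hr
  have hroot : x ^ 2 < 2 * t := by nlinarith
  have hcofactor : 2 * (t + r) - x ^ 2 ≠ 0 := by linarith
  exact sub_eq_zero.mp ((mul_eq_zero.mp hfactor).resolve_right hcofactor)

theorem sq_mul_sq_eq_sq_mul_one_add_iff {α β x t : ℝ} (hα : 0 < α) (hβ : 0 < β)
    (hx : x = √2 * α / β) (ht : 0 < t) :
    β ^ 2 * t ^ 2 = α ^ 2 * (1 + t) ↔ t = x / 4 * (x + √(x ^ 2 + 8)) := by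
  have hxβ : x ^ 2 * β ^ 2 = 2 * α ^ 2 := by
    rw [hx, div_pow, mul_pow, Real.sq_sqrt zero_le_two]
    field_simp
  rw [← two_mul_sq_eq_sq_mul_one_add_iff (hx ▸ by positivity) ht]
  constructor <;> intro h
  · refine mul_left_cancel₀ (pow_ne_zero 2 hβ.ne') ?_
    linear_combination 2 * h - (1 + t) * hxβ
  · refine mul_left_cancel₀ two_ne_zero ?_
    linear_combination β ^ 2 * h + (1 + t) * hxβ

/-- factorization of `8φ⁷·V'(φ)` and the resulting description of
the critical points of `V`. -/
theorem stmt_4 (α β : ℝ) (hα : 0 < α) (hβ : 0 < β) (x : ℝ)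
    (hx : x = Real.sqrt 2 * α / β) :
    ∀ φ : ℝ, 0 < φ →
      (8 * φ ^ 7 * deriv (V α β) φ
        = (φ ^ 4 - 1) * (β ^ 2 * φ ^ 8 - α ^ 2 * (1 + φ ^ 4))) ∧
      (deriv (V α β) φ = 0 ↔
        φ = 1 ∨ φ ^ 4 = (x / 4) * (x + Real.sqrt (x ^ 2 + 8))) := by
  intro φ hφ
  have hfactor := eight_mul_pow_seven_mul_deriv_V α β hφ.ne'
  refine ⟨hfactor, ?_⟩
  rw [← mul_right_inj' (by positivity : 8 * φ ^ 7 ≠ 0), mul_zero, hfactor, mul_eq_zero,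
    sub_eq_zero, sub_eq_zero, pow_eq_one_iff_of_nonneg hφ.le four_ne_zero,
    ← sq_mul_sq_eq_sq_mul_one_add_iff hα hβ hx (by positivity), ← pow_mul]
end

section
/- Let β, R > 0, let s > 0 with s < R/2, and let α be a nonzero real number. Then there exists X > 0 satisfying simultaneously β²X³ + α² − R X² = 0 and s·X² + (1/8)·(R X² + 7α² − 5β²X³) = 0 if and only if α² = (4/(27β⁴))·(R + s)²·(R − 2s); and in this case the common root is X = (2/(3β²))·(R + s). -/
/-- resultant computation locating the bifurcation points: the
system `β²X³ + α² − RX² = 0`, `sX² + (1/8)(RX² + 7α² − 5β²X³) = 0` has a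
positive solution iff `α² = (4/(27β⁴))(R+s)²(R−2s)`, and the common root is then
`X = (2/(3β²))(R+s)`. -/
theorem stmt_15 (R β s α : ℝ) (hβ : 0 < β) (hR : 0 < R) (hs : 0 < s)
    (hsR : s < R / 2) (hα : α ≠ 0) :
    ((∃ X : ℝ, 0 < X ∧ β ^ 2 * X ^ 3 + α ^ 2 - R * X ^ 2 = 0 ∧
        s * X ^ 2 + (1 / 8) * (R * X ^ 2 + 7 * α ^ 2 - 5 * β ^ 2 * X ^ 3) = 0) ↔
      α ^ 2 = (4 / (27 * β ^ 4)) * (R + s) ^ 2 * (R - 2 * s)) ∧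
    (∀ X : ℝ, 0 < X → β ^ 2 * X ^ 3 + α ^ 2 - R * X ^ 2 = 0 →
      s * X ^ 2 + (1 / 8) * (R * X ^ 2 + 7 * α ^ 2 - 5 * β ^ 2 * X ^ 3) = 0 →
      X = (2 / (3 * β ^ 2)) * (R + s)) := by
  have hβ2 : (β : ℝ) ^ 2 ≠ 0 := by positivity
  have key : ∀ X : ℝ, 0 < X → β ^ 2 * X ^ 3 + α ^ 2 - R * X ^ 2 = 0 →
      s * X ^ 2 + (1 / 8) * (R * X ^ 2 + 7 * α ^ 2 - 5 * β ^ 2 * X ^ 3) = 0 →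
      X = (2 / (3 * β ^ 2)) * (R + s) := by
    intro X hX h1 h2
    have hX2 : X ^ 2 ≠ 0 := by positivity
    have hcomb : X ^ 2 * ((s + R) * 2 - 3 * β ^ 2 * X) = 0 := by nlinarith [h1, h2]
    have h3 : (s + R) * 2 - 3 * β ^ 2 * X = 0 := by
      rcases mul_eq_zero.mp hcomb with h | h
      · exact absurd h hX2
      · exact h
    field_simp
    linarith
  refine ⟨⟨?_, ?_⟩, key⟩
  · rintro ⟨X, hX, h1, h2⟩
    have hXe := key X hX h1 h2
    subst hXe
    field_simp at h1 ⊢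
    refine mul_left_cancel₀ (show (9:ℝ) * β ^ 6 ≠ 0 by positivity) ?_
    linear_combination (9 * β ^ 6) * h1
  · intro hα2
    refine ⟨(2 / (3 * β ^ 2)) * (R + s), by positivity, ?_, ?_⟩ <;>
      · rw [hα2]; field_simp; ring
end

section
/- Let Λ > 0, τ ∈ ℝ and λ ∈ {−1, 0, 1}. There exists t ∈ ℝ with Λt² − λ > 0 and Λ·t/√(Λt² − λ) = τ if and only if: (λ = −1 and τ² < Λ), or (λ = 0 and τ² = Λ), or (λ = 1 and τ² > Λ). -/
/-!
Writing `D = Λt² − λ`, a slice of mean curvature `τ = Λt/√D` satisfies `D (τ² − Λ) = Λλ`, so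
`τ² − Λ` has the sign of `λ`. Conversely, if `Λs²(τ² − Λ) = λ` for some `s > 0` (possible exactly
when the signs agree), then `t = τs` gives `D = (Λs)²` and hence mean curvature `τ`.
-/

/-- The mean curvature `τ_N(t)` of the slice `t = const` of the Nariai metric with parameter `λ`. -/
noncomputable def nariaiMeanCurvature (Λ lam t : ℝ) : ℝ :=
  Λ * t / Real.sqrt (Λ * t ^ 2 - lam)

theorem nariaiMeanCurvature_sq_sub {Λ lam t : ℝ} (hD : 0 < Λ * t ^ 2 - lam) :
    nariaiMeanCurvature Λ lam t ^ 2 - Λ = Λ * lam / (Λ * t ^ 2 - lam) := by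
  rw [nariaiMeanCurvature, div_pow, Real.sq_sqrt hD.le]
  field_simp
  ring

theorem sign_nariaiMeanCurvature_sq_sub {Λ lam t : ℝ} (hΛ : 0 < Λ)
    (hD : 0 < Λ * t ^ 2 - lam) :
    SignType.sign (nariaiMeanCurvature Λ lam t ^ 2 - Λ) = SignType.sign lam := by
  rw [nariaiMeanCurvature_sq_sub hD, mul_div_right_comm, sign_mul, sign_pos (div_pos hΛ hD),
    one_mul]

theorem nariaiMeanCurvature_mul {Λ lam τ s : ℝ} (hΛ : 0 < Λ) (hs : 0 < s)
    (h : Λ * s ^ 2 * (τ ^ 2 - Λ) = lam) :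
    0 < Λ * (τ * s) ^ 2 - lam ∧ nariaiMeanCurvature Λ lam (τ * s) = τ := by
  have hD : Λ * (τ * s) ^ 2 - lam = (Λ * s) ^ 2 := by rw [← h]; ring
  refine ⟨hD ▸ by positivity, ?_⟩
  rw [nariaiMeanCurvature, hD, Real.sqrt_sq (by positivity)]
  field_simp

theorem exists_nariaiMeanCurvature_eq_iff {Λ lam τ : ℝ} (hΛ : 0 < Λ) :
    (∃ t, 0 < Λ * t ^ 2 - lam ∧ nariaiMeanCurvature Λ lam t = τ) ↔
      SignType.sign (τ ^ 2 - Λ) = SignType.sign lam := by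
  refine ⟨fun ⟨t, hD, ht⟩ => ht ▸ sign_nariaiMeanCurvature_sq_sub hΛ hD, fun hsign => ?_⟩
  rcases eq_or_ne lam 0 with rfl | hlam
  · have hτ : τ ^ 2 - Λ = 0 := sign_eq_zero_iff.mp (hsign.trans sign_zero)
    exact ⟨τ * 1, nariaiMeanCurvature_mul hΛ one_pos (by rw [hτ, mul_zero])⟩
  · have hq : 0 < lam / (Λ * (τ ^ 2 - Λ)) := by
      rcases hlam.lt_or_gt with hneg | hpos
      · have hτ := sign_eq_neg_one_iff.mp (hsign.trans (sign_neg hneg))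
        exact div_pos_of_neg_of_neg hneg (mul_neg_of_pos_of_neg hΛ hτ)
      · have hτ := sign_eq_one_iff.mp (hsign.trans (sign_pos hpos))
        exact div_pos hpos (mul_pos hΛ hτ)
    have hτ : τ ^ 2 - Λ ≠ 0 := by
      rintro h
      simp [h] at hq
    have hs := Real.sq_sqrt hq.le
    refine ⟨τ * Real.sqrt (lam / (Λ * (τ ^ 2 - Λ))),
      nariaiMeanCurvature_mul hΛ (Real.sqrt_pos.mpr hq) ?_⟩
    rw [hs]
    field_simp

/-- classification of which Nariai space-time (`λ = −1, 0, 1`)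
admits a CMC slice of mean curvature `τ`: the equation
`Λt/√(Λt² − λ) = τ` has a solution with `Λt² − λ > 0` iff
(`λ = −1` and `τ² < Λ`), or (`λ = 0` and `τ² = Λ`), or (`λ = 1` and `τ² > Λ`). -/
theorem stmt_17 (Λ τ lam : ℝ) (hΛ : 0 < Λ)
    (hlam : lam = -1 ∨ lam = 0 ∨ lam = 1) :
    (∃ t : ℝ, 0 < Λ * t ^ 2 - lam ∧
        Λ * t / Real.sqrt (Λ * t ^ 2 - lam) = τ) ↔
      ((lam = -1 ∧ τ ^ 2 < Λ) ∨ (lam = 0 ∧ τ ^ 2 = Λ) ∨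
        (lam = 1 ∧ Λ < τ ^ 2)) := by
  refine (exists_nariaiMeanCurvature_eq_iff hΛ).trans ?_
  rcases hlam with rfl | rfl | rfl <;>
    norm_num [sign_eq_neg_one_iff, sign_eq_zero_iff, sign_eq_one_iff, sub_eq_zero]
end

section
/- Let τ, Λ, α, R be real numbers, set β² = 2Λ − (2/3)τ², and let φ > 0, p ∈ ℝ, E ∈ ℝ satisfy the energy relation (1/2)p² − (R/16)φ² + (β²/48)φ⁶ − (α²/48)φ⁻⁶ = E. Then, setting m = −4E − τα/(3√6), the following identity holds: 16p²/φ⁶ − 4·(τ/3 − α/(√6·φ⁶))² = (4/φ⁴)·(R/2 − 2m/φ² − Λφ⁴/3). -/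
lemma sq_div_sqrt_mul {c : ℝ} (hc : 0 ≤ c) (a x : ℝ) :
    (a / (Real.sqrt c * x)) ^ 2 = a ^ 2 / (c * x ^ 2) := by
  rw [div_pow, mul_pow, Real.sq_sqrt hc]

/-- the Hawking-mass identity: with `β² = 2Λ − (2/3)τ²` and the
energy relation `½p² − (R/16)φ² + (β²/48)φ⁶ − (α²/48)φ⁻⁶ = E`, setting
`m = −4E − τα/(3√6)` one has
`16p²/φ⁶ − 4(τ/3 − α/(√6 φ⁶))² = (4/φ⁴)(R/2 − 2m/φ² − Λφ⁴/3)`. -/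
theorem stmt_19 (τ Λ α R β φ p E : ℝ)
    (hβ : β ^ 2 = 2 * Λ - (2 / 3) * τ ^ 2) (hφ : 0 < φ)
    (hE : (1 / 2) * p ^ 2 - (R / 16) * φ ^ 2 + (β ^ 2 / 48) * φ ^ 6
      - (α ^ 2 / 48) / φ ^ 6 = E)
    (m : ℝ) (hm : m = -4 * E - τ * α / (3 * Real.sqrt 6)) :
    16 * p ^ 2 / φ ^ 6 - 4 * (τ / 3 - α / (Real.sqrt 6 * φ ^ 6)) ^ 2
      = (4 / φ ^ 4) * (R / 2 - 2 * m / φ ^ 2 - Λ * φ ^ 4 / 3) := by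
  -- The cross term of the square cancels the `τα/(3√6)` part of `m`; only the
  -- square of the `√6` term needs `√6 ^ 2 = 6`.
  rw [sub_sq, sq_div_sqrt_mul (by norm_num), hm, ← hE, hβ]
  field_simp
  ring
end
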